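/- Let G be a connected graph on m vertices and H a connected graph on n vertices, and let c be an exact r-coloring of G □ H with no rainbow 3-APs. If G_1,...,G_n are the labeled copies of G in G □ H, then |c(V(G_j)) \ c(V(G_i))| ≤ 1 for all 1 ≤ i, j ≤ n. -/

import Mathlib

open SimpleGraph

/-- A rainbow 3-AP in `G` under coloring `c`: three vertices with
`d(v₁,v₂) = d(v₂,v₃)` receiving pairwise distinct colors. -/
def HasRainbow3AP {V C : Type*} (G : SimpleGraph V) (c : V → C) : Prop :=
  ∃ v₁ v₂ v₃ : V, G.dist v₁ v₂ = G.dist v₂ v₃ ∧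
    c v₁ ≠ c v₂ ∧ c v₂ ≠ c v₃ ∧ c v₁ ≠ c v₃

/-- The anti-van der Waerden number `aw(G,3)`: the least positive `r` such that
every surjective coloring with `r` colors yields a rainbow 3-AP. -/
noncomputable def aw {V : Type*} (G : SimpleGraph V) : ℕ :=
  sInf {r : ℕ | 0 < r ∧ ∀ c : V → Fin r, Function.Surjective c → HasRainbow3AP G c}


/-!
Let `a ≠ b` be colors missing from the copy `G_i`. We show by induction on `s = d_H(g, i)` that
no copy `G_g` contains both, using `d((x, h), (x', h')) = d_G(x, x') + d_H(h, h')`. Suppose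
`c(u, g) = a`, `c(v, g) = b` and `D = d_G(u, v)`. If `s ≤ D`, then `(v, g), (u, g), (x, i)` with
`x` on a `u`–`v` geodesic at distance `D - s` from `u` is a rainbow 3-AP. If `s > D`, walk
diagonally along geodesics `x₀ … x_D` from `u` to `v` and `h₀ … h_s` from `g` to `i`: every
`(x_m, h_m)` is at distance `D` from `(v, g)`, so it has color `a` or `b`, and the color cannot
change from `a` to `b` because `(x_m, h_m), (x_m, i), (x_{m+1}, h_{m+1})` is a 3-AP. So
`c(v, h_D) = a`, symmetrically `c(u, h_D) = b`, and `G_{h_D}` is closer to `G_i`.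
-/

namespace SimpleGraph

variable {V W : Type*} {G : SimpleGraph V} {H : SimpleGraph W}

lemma Connected.dist_boxProd (hG : G.Connected) (hH : H.Connected) (x y : V × W) :
    (G □ H).dist x y = G.dist x.1 y.1 + H.dist x.2 y.2 := by
  have h := ((hG.boxProd hH).preconnected x y).coe_dist_eq_edist
  rw [edist_boxProd, ← (hG.preconnected _ _).coe_dist_eq_edist,
    ← (hH.preconnected _ _).coe_dist_eq_edist] at h
  exact_mod_cast h

lemma Walk.dist_getVert_of_length_eq_dist {u v : V} {p : G.Walk u v}
    (hp : p.length = G.dist u v) {k : ℕ} (hk : k ≤ p.length) :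
    G.dist u (p.getVert k) = k ∧ G.dist (p.getVert k) v = p.length - k := by
  have hleft : G.dist u (p.getVert k) ≤ k := by simpa [hk] using dist_le (p.take k)
  have hright : G.dist (p.getVert k) v ≤ p.length - k := by simpa using dist_le (p.drop k)
  have htri := (p.take k).reachable.dist_triangle_left v
  omega

lemma eq_or_eq_of_not_hasRainbow3AP {C : Type*} {c : V → C} (h : ¬HasRainbow3AP G c)
    {x y z : V} (hd : G.dist x y = G.dist y z) (hxy : c x ≠ c y) : c z = c x ∨ c z = c y := by
  by_contra! hz
  exact h ⟨x, y, z, hd, hxy, fun e => hz.2 e.symm, fun e => hz.1 e.symm⟩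

end SimpleGraph

section BoxProdColoring

variable {V W C : Type*} {G : SimpleGraph V} {H : SimpleGraph W} {c : V × W → C} {a b : C}
  {i g : W} {u v : V}

lemma dist_lt_of_colors_absent (hG : G.Connected) (hH : H.Connected)
    (hrf : ¬HasRainbow3AP (G □ H) c) (hai : ∀ x, c (x, i) ≠ a) (hbi : ∀ x, c (x, i) ≠ b)
    (hab : a ≠ b) (hu : c (u, g) = a) (hv : c (v, g) = b) : G.dist u v < H.dist g i := by
  by_contra! hle
  obtain ⟨p, hp⟩ := hG.exists_walk_length_eq_dist u v
  set x := p.getVert (G.dist u v - H.dist g i)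
  have hx : G.dist u x = G.dist u v - H.dist g i :=
    (p.dist_getVert_of_length_eq_dist hp (by omega)).1
  have hd : (G □ H).dist (v, g) (u, g) = (G □ H).dist (u, g) (x, i) := by
    simp only [hG.dist_boxProd hH, SimpleGraph.dist_self, hx, dist_comm (u := v)]
    omega
  rcases eq_or_eq_of_not_hasRainbow3AP hrf hd (by rw [hu, hv]; exact hab.symm) with h | h
  · exact hbi x (h.trans hv)
  · exact hai x (h.trans hu)

lemma color_getVert_getVert_eq (hG : G.Connected) (hH : H.Connected)
    (hrf : ¬HasRainbow3AP (G □ H) c) (hai : ∀ x, c (x, i) ≠ a) (hbi : ∀ x, c (x, i) ≠ b)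
    (hab : a ≠ b) (hu : c (u, g) = a) (hv : c (v, g) = b)
    {p : G.Walk u v} (hp : p.length = G.dist u v) {q : H.Walk g i} (hq : q.length = H.dist g i)
    (hpq : p.length ≤ q.length) {m : ℕ} (hm : m ≤ p.length) :
    c (p.getVert m, q.getVert m) = a := by
  induction m with
  | zero => simpa using hu
  | succ m ih =>
    have hp_succ := p.dist_getVert_of_length_eq_dist hp hm
    have hq_m := q.dist_getVert_of_length_eq_dist hq (k := m) (by omega)
    have hq_succ := q.dist_getVert_of_length_eq_dist hq (k := m + 1) (by omega)
    have hstep : G.dist (p.getVert m) (p.getVert (m + 1)) = 1 :=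
      dist_eq_one_iff_adj.mpr (p.adj_getVert_succ (by omega))
    have ha_or_b : c (p.getVert (m + 1), q.getVert (m + 1)) = a ∨
        c (p.getVert (m + 1), q.getVert (m + 1)) = b := by
      rw [← hu, ← hv]
      refine eq_or_eq_of_not_hasRainbow3AP hrf ?_ (by rwa [hu, hv])
      simp only [hG.dist_boxProd hH, SimpleGraph.dist_self, dist_comm (u := v), hp_succ.2,
        hq_succ.1]
      omega
    refine ha_or_b.resolve_right fun hb => ?_
    have hd : (G □ H).dist (p.getVert m, q.getVert m) (p.getVert m, i) =
        (G □ H).dist (p.getVert m, i) (p.getVert (m + 1), q.getVert (m + 1)) := by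
      simp only [hG.dist_boxProd hH, SimpleGraph.dist_self, hstep, hq_m.2, dist_comm (u := i),
        hq_succ.2]
      omega
    rcases eq_or_eq_of_not_hasRainbow3AP hrf hd (by rw [ih (by omega)]; exact (hai _).symm)
      with h | h
    · rw [hb, ih (by omega)] at h
      exact hab h.symm
    · exact hbi _ (h.symm.trans hb)

lemma color_ne_of_same_layer (hG : G.Connected) (hH : H.Connected)
    (hrf : ¬HasRainbow3AP (G □ H) c) (hai : ∀ x, c (x, i) ≠ a) (hbi : ∀ x, c (x, i) ≠ b)
    (hab : a ≠ b) (hu : c (u, g) = a) : c (v, g) ≠ b := by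
  intro hv
  induction hs : H.dist g i using Nat.strong_induction_on generalizing g u v with
  | _ s ih =>
  have hlt := dist_lt_of_colors_absent hG hH hrf hai hbi hab hu hv
  have hpos : 0 < G.dist u v := hG.pos_dist_of_ne (by rintro rfl; exact hab (hu ▸ hv))
  obtain ⟨p, hp⟩ := hG.exists_walk_length_eq_dist u v
  obtain ⟨q, hq⟩ := hH.exists_walk_length_eq_dist g i
  have hpq : p.length ≤ q.length := by omega
  have hva : c (v, q.getVert p.length) = a := by
    simpa using color_getVert_getVert_eq hG hH hrf hai hbi hab hu hv hp hq hpq le_rfl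
  have hub : c (u, q.getVert p.length) = b := by
    simpa [Walk.getVert_reverse] using
      color_getVert_getVert_eq hG hH hrf hbi hai hab.symm hv hu (p := p.reverse)
        (by simpa [dist_comm]) hq (by simpa) (m := p.length) (by simp)
  exact ih _ (by omega) hva hub (q.dist_getVert_of_length_eq_dist hq hpq).2

end BoxProdColoring

theorem stmt_5_general {V W : Type*} [Fintype V]
    (G : SimpleGraph V) (H : SimpleGraph W)
    (hG : G.Connected) (hH : H.Connected)
    (r : ℕ) (c : V × W → Fin r)
    (hrf : ¬ HasRainbow3AP (G □ H) c) (i j : W) :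
    ((Finset.univ.image (fun u : V => c (u, j))) \
      (Finset.univ.image (fun u : V => c (u, i)))).card ≤ 1 := by
  refine Finset.card_le_one.mpr fun a ha b hb => ?_
  simp only [Finset.mem_sdiff, Finset.mem_image, Finset.mem_univ, true_and, not_exists] at ha hb
  obtain ⟨⟨u, hu⟩, hai⟩ := ha
  obtain ⟨⟨v, hv⟩, hbi⟩ := hb
  by_contra hab
  exact color_ne_of_same_layer hG hH hrf hai hbi hab hu hv

theorem stmt_5 {V W : Type*} [Fintype V] [Fintype W]
    (G : SimpleGraph V) (H : SimpleGraph W)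
    (hG : G.Connected) (hH : H.Connected)
    (r : ℕ) (c : V × W → Fin r) (hc : Function.Surjective c)
    (hrf : ¬ HasRainbow3AP (G □ H) c) (i j : W) :
    ((Finset.univ.image (fun u : V => c (u, j))) \
      (Finset.univ.image (fun u : V => c (u, i)))).card ≤ 1 :=
  stmt_5_general G H hG hH r c hrf i j
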